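/- For binary X, Y, W, the interaction parameter satisfies the identity βxw = log RR_{W|Y,X=1} − log RR_{W|Y,X=0} − log RR_{W̄|Y,X=1} + log RR_{W̄|Y,X=0}, where W̄ = 1 − W, RR_{W|Y,X=x} = P(W=1|Y=1,X=x)/P(W=1|Y=0,X=x) and RR_{W̄|Y,X=x} = P(W=0|Y=1,X=x)/P(W=0|Y=0,X=x). -/

import Mathlib

noncomputable def expit (t : ℝ) : ℝ := Real.exp t / (1 + Real.exp t)

/-- `P(Y=1 | X=x, W=w)` under the logistic model. -/
noncomputable def pY (β0 βx βw βxw x w : ℝ) : ℝ := expit (β0 + βx * x + βw * w + βxw * x * w)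

/-- `P(W=1 | X=x)` under the logistic model. -/
noncomputable def pW (γ0 γx x : ℝ) : ℝ := expit (γ0 + γx * x)

/-- joint conditional probability `P(Y=y, W=w | X=x)` induced by the two logistic models. -/
noncomputable def jnt (β0 βx βw βxw γ0 γx x : ℝ) (y w : Bool) : ℝ :=
  (if y then pY β0 βx βw βxw x (if w then 1 else 0)
   else 1 - pY β0 βx βw βxw x (if w then 1 else 0)) *
  (if w then pW γ0 γx x else 1 - pW γ0 γx x)

/-- `P(W=w | Y=y, X=x)` obtained via Bayes' theorem. -/
noncomputable def pWgYX (β0 βx βw βxw γ0 γx x : ℝ) (y w : Bool) : ℝ :=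
  jnt β0 βx βw βxw γ0 γx x y w /
    (jnt β0 βx βw βxw γ0 γx x y true + jnt β0 βx βw βxw γ0 γx x y false)

/-- marginal (over `W`) probability `P(Y=y | X=x)`. -/
noncomputable def pYgX (β0 βx βw βxw γ0 γx x : ℝ) (y : Bool) : ℝ :=
  jnt β0 βx βw βxw γ0 γx x y true + jnt β0 βx βw βxw γ0 γx x y false

/-- `g_y(x)`, the conditional log odds of `W` given `Y=y, X=x`. -/
noncomputable def g (β0 βx βw βxw γ0 γx : ℝ) (y : Bool) (x : ℝ) : ℝ :=
  Real.log (pWgYX β0 βx βw βxw γ0 γx x y true / pWgYX β0 βx βw βxw γ0 γx x y false)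

/-- the marginal log odds of `Y` given `X=x`. -/
noncomputable def margLogit (β0 βx βw βxw γ0 γx : ℝ) (x : ℝ) : ℝ :=
  Real.log (pYgX β0 βx βw βxw γ0 γx x true / pYgX β0 βx βw βxw γ0 γx x false)

/-- `β(x)`, the marginal log-odds effect of `X` on `Y`. -/
noncomputable def betaMarg (β0 βx βw βxw γ0 γx : ℝ) (x : ℝ) : ℝ :=
  deriv (margLogit β0 βx βw βxw γ0 γx) x

/-!
At each `x`, `RR_{W|Y,X=x} / RR_{W̄|Y,X=x}` is the odds ratio of `(Y, W)` given `X = x`: the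
Bayes normalisers `P(Y = y | X = x)` cancel, and so does `P(W = w | X = x)`, leaving the ratio
of the odds of `Y` at `W = 1` and `W = 0`, i.e. `exp (βw + βxw x)`. Taking logs and
differencing at `x = 1` and `x = 0` isolates `βxw`.
-/

lemma expit_pos (t : ℝ) : 0 < expit t := by
  unfold expit
  positivity

lemma one_sub_expit (t : ℝ) : 1 - expit t = 1 / (1 + Real.exp t) := by
  unfold expit
  field_simp
  ring

lemma one_sub_expit_pos (t : ℝ) : 0 < 1 - expit t := by
  rw [one_sub_expit]
  positivity

lemma expit_div_one_sub_expit (t : ℝ) : expit t / (1 - expit t) = Real.exp t := by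
  rw [one_sub_expit, expit]
  field_simp

lemma jnt_pos (β0 βx βw βxw γ0 γx x : ℝ) (y w : Bool) :
    0 < jnt β0 βx βw βxw γ0 γx x y w := by
  unfold jnt
  apply mul_pos <;> split_ifs <;> first | exact expit_pos _ | exact one_sub_expit_pos _

lemma jnt_true_div_jnt_false (β0 βx βw βxw γ0 γx x : ℝ) (w : Bool) :
    jnt β0 βx βw βxw γ0 γx x true w / jnt β0 βx βw βxw γ0 γx x false w
      = Real.exp (β0 + βx * x + βw * (if w then 1 else 0) + βxw * x * (if w then 1 else 0)) := by
  have hW : (if w then pW γ0 γx x else 1 - pW γ0 γx x) ≠ 0 := by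
    cases w
    · exact (one_sub_expit_pos _).ne'
    · exact (expit_pos _).ne'
  simp only [jnt, if_true, Bool.false_eq_true, if_false, mul_div_mul_right _ _ hW, pY,
    expit_div_one_sub_expit]

lemma log_div_div_sub_log_div_div {a b c d s t : ℝ} (ha : a ≠ 0) (hb : b ≠ 0) (hc : c ≠ 0)
    (hd : d ≠ 0) (hs : s ≠ 0) (ht : t ≠ 0) :
    Real.log (a / s / (c / t)) - Real.log (b / s / (d / t))
      = Real.log (a / c) - Real.log (b / d) := by
  have hsplit : ∀ u v : ℝ, u / s / (v / t) = u / v * (t / s) := fun u v => by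
    rw [div_div_div_eq, div_mul_div_comm, mul_comm v s]
  rw [hsplit, hsplit, Real.log_mul (div_ne_zero ha hc) (div_ne_zero ht hs),
    Real.log_mul (div_ne_zero hb hd) (div_ne_zero ht hs)]
  ring

lemma log_RR_sub_log_RR_compl (β0 βx βw βxw γ0 γx x : ℝ) :
    Real.log (pWgYX β0 βx βw βxw γ0 γx x true true / pWgYX β0 βx βw βxw γ0 γx x false true)
      - Real.log (pWgYX β0 βx βw βxw γ0 γx x true false / pWgYX β0 βx βw βxw γ0 γx x false false)
    = βw + βxw * x := by
  have hj := jnt_pos β0 βx βw βxw γ0 γx x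
  unfold pWgYX
  rw [log_div_div_sub_log_div_div (hj _ _).ne' (hj _ _).ne' (hj _ _).ne' (hj _ _).ne'
    (add_pos (hj _ _) (hj _ _)).ne' (add_pos (hj _ _) (hj _ _)).ne',
    jnt_true_div_jnt_false, jnt_true_div_jnt_false, Real.log_exp, Real.log_exp]
  simp only [if_true, Bool.false_eq_true, if_false]
  ring

/-- `βxw = log RR_{W|Y,X=1} − log RR_{W|Y,X=0} − log RR_{W̄|Y,X=1} + log RR_{W̄|Y,X=0}`,
where `RR_{W|Y,X=x} = P(W=1|Y=1,X=x)/P(W=1|Y=0,X=x)` and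
`RR_{W̄|Y,X=x} = P(W=0|Y=1,X=x)/P(W=0|Y=0,X=x)`. -/
theorem interaction_as_log_RR (β0 βx βw βxw γ0 γx : ℝ) :
    βxw
      = Real.log (pWgYX β0 βx βw βxw γ0 γx 1 true true / pWgYX β0 βx βw βxw γ0 γx 1 false true)
        - Real.log (pWgYX β0 βx βw βxw γ0 γx 0 true true / pWgYX β0 βx βw βxw γ0 γx 0 false true)
        - Real.log (pWgYX β0 βx βw βxw γ0 γx 1 true false / pWgYX β0 βx βw βxw γ0 γx 1 false false)
        + Real.log (pWgYX β0 βx βw βxw γ0 γx 0 true false / pWgYX β0 βx βw βxw γ0 γx 0 false false) := by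
  have h1 := log_RR_sub_log_RR_compl β0 βx βw βxw γ0 γx 1
  have h0 := log_RR_sub_log_RR_compl β0 βx βw βxw γ0 γx 0
  linarith
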